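/- arXiv:1104.0120 — 2 statements merged into one kernel-verified Lean document; each statement's English description precedes it below -/
import Mathlib

section
/- Let p ≥ 5, e ≥ 2, and let π satisfy v_p(π) = 1/e. Suppose F = Σ a_{α_0...α_r} x^{α_0} (δ_π x)^{α_1} ··· (δ_π^r x)^{α_r} is a restricted power series over R_π with 1 ≤ r ≤ e-1, and each δ_π^i x (1 ≤ i ≤ e-1) equals π·G_i(δ_p x,...,δ_p^i x) for polynomials G_i over R_π of degree ≤ p^{i-1}. Then, expanded in the variables x, δ_p x, ..., δ_p^r x, the coefficient of any monomial x^α (δ_p x)^{β_1}···(δ_p^r x)^{β_r} in F has p-adic valuation at least (1/e)·(|β_1+...+β_r|/p^{r-1} - 1). In particular F is overconvergent in the variables δ_p x,...,δ_p^r x with radius ≥ p^{1/(p^{r-1} e)}. -/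
/-!
Each `δ_π`-variable of level `i ≥ 1` becomes `π · G_i`, a polynomial with integral coefficients
of degree `≤ p^(r-1)` in the `δ_p`-variables. Hence a term of `F` of total `δ_π`-degree `n`
contributes only to monomials of `δ_p`-degree `≤ n p^(r-1)`, with coefficients of norm
`≤ ‖π‖^n = p^(-n/e)`: in an ultrametric ring, products of polynomials with coefficients bounded by
`A` and `B` have coefficients bounded by `A B`. The ultrametric inequality bounds the sum of all
contributions by the same quantity.
-/

open Filter

/-- The total degree of a monomial in the `δ`-variables (levels `1,…,r`), ignoring the
level-`0` variables `x`.  Variables are indexed by pairs `(i, j)`: level `i : Fin (r+1)`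
and component `j : Fin d`. -/
def DeltaDeg (r d : ℕ) (mo : (Fin (r + 1) × Fin d) →₀ ℕ) : ℕ :=
  ∑ v : Fin (r + 1) × Fin d, if (v.1 : ℕ) = 0 then 0 else mo v

open MvPolynomial Finsupp
open scoped NNReal

theorem Finsupp.weight_le_weight {σ : Type*} {w w' : σ → ℕ} (h : ∀ i, w i ≤ w' i)
    (f : σ →₀ ℕ) : weight w f ≤ weight w' f :=
  Finset.sum_le_sum fun i _ => Nat.mul_le_mul_left (f i) (h i)

namespace MvPolynomial

variable {σ ι R : Type*}

section WeightedTotalDegree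

variable [CommSemiring R] (w : σ → ℕ)

theorem weightedTotalDegree_one_le : (1 : MvPolynomial σ R).weightedTotalDegree w ≤ 0 :=
  Finset.sup_le fun m hm => by
    rw [Finset.mem_singleton.mp (support_monomial_subset hm), map_zero]

theorem weightedTotalDegree_mul_le (P Q : MvPolynomial σ R) :
    (P * Q).weightedTotalDegree w ≤ P.weightedTotalDegree w + Q.weightedTotalDegree w :=
  AddMonoidAlgebra.sup_support_coeff_mul_le (fun a b => (map_add _ a b).le) P Q

theorem weightedTotalDegree_finsetProd_le (s : Finset ι) (f : ι → MvPolynomial σ R) :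
    (∏ i ∈ s, f i).weightedTotalDegree w ≤ ∑ i ∈ s, (f i).weightedTotalDegree w :=
  s.apply_prod_le_sum_apply _ (weightedTotalDegree_one_le w) (weightedTotalDegree_mul_le w)

theorem weightedTotalDegree_pow_le (P : MvPolynomial σ R) (k : ℕ) :
    (P ^ k).weightedTotalDegree w ≤ k * P.weightedTotalDegree w := by
  simpa [Finset.prod_const, Finset.sum_const] using
    weightedTotalDegree_finsetProd_le w (Finset.range k) fun _ => P

theorem weightedTotalDegree_finsuppProd_pow_le (f : ι → MvPolynomial σ R) (α : ι →₀ ℕ) :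
    (α.prod fun i k => f i ^ k).weightedTotalDegree w ≤
      weight (fun i => (f i).weightedTotalDegree w) α :=
  (weightedTotalDegree_finsetProd_le w _ _).trans
    (Finset.sum_le_sum fun i _ => weightedTotalDegree_pow_le w (f i) (α i))

theorem weightedTotalDegree_X_le (s : σ) : (X s : MvPolynomial σ R).weightedTotalDegree w ≤ w s :=
  Finset.sup_le fun m hm => by
    classical
    rw [Finset.mem_singleton.mp (support_monomial_subset hm), weight_single, one_smul]

theorem weightedTotalDegree_le_totalDegree (hw : ∀ i, w i ≤ 1) (P : MvPolynomial σ R) :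
    P.weightedTotalDegree w ≤ P.totalDegree :=
  weightedTotalDegree_one P ▸ Finset.sup_mono_fun fun m _ => weight_le_weight hw m

end WeightedTotalDegree

section CoeffNormLE

variable [NormedCommRing R]

/-- Coefficient bounds are stated after multiplying by an arbitrary `b`, because `‖1‖` may
exceed `1` in a normed ring: this keeps the empty product bounded by `1`. -/
def CoeffNormLE (P : MvPolynomial σ R) (A : ℝ≥0) : Prop :=
  ∀ m b, ‖b * coeff m P‖ ≤ ‖b‖ * A

theorem coeffNormLE_of_norm_coeff_le {P : MvPolynomial σ R} {A : ℝ≥0}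
    (h : ∀ m, ‖coeff m P‖ ≤ A) : CoeffNormLE P A := fun m b =>
  (norm_mul_le b _).trans (mul_le_mul_of_nonneg_left (h m) (norm_nonneg b))

theorem coeffNormLE_monomial_one (s : σ →₀ ℕ) : CoeffNormLE (monomial s (1 : R)) 1 := by
  classical
  intro m b
  rw [coeff_monomial]
  split_ifs <;> simp

theorem CoeffNormLE.C_mul {P : MvPolynomial σ R} {A : ℝ≥0} (h : CoeffNormLE P A) (c : R) :
    CoeffNormLE (C c * P) (‖c‖₊ * A) := fun m b => by
  rw [coeff_C_mul, ← mul_assoc, NNReal.coe_mul, coe_nnnorm, ← mul_assoc]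
  exact (h m (b * c)).trans (mul_le_mul_of_nonneg_right (norm_mul_le b c) A.2)

variable [IsUltrametricDist R]

theorem CoeffNormLE.mul {P Q : MvPolynomial σ R} {A B : ℝ≥0} (hP : CoeffNormLE P A)
    (hQ : CoeffNormLE Q B) : CoeffNormLE (P * Q) (A * B) := fun m b => by
  classical
  rw [coeff_mul, Finset.mul_sum]
  refine IsUltrametricDist.norm_sum_le_of_forall_le_of_nonneg (by positivity) fun x _ => ?_
  calc ‖b * (coeff x.1 P * coeff x.2 Q)‖ = ‖b * coeff x.1 P * coeff x.2 Q‖ := by rw [mul_assoc]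
    _ ≤ ‖b * coeff x.1 P‖ * B := hQ x.2 _
    _ ≤ ‖b‖ * A * B := mul_le_mul_of_nonneg_right (hP x.1 b) B.2
    _ = ‖b‖ * ↑(A * B) := by push_cast; ring

theorem CoeffNormLE.finsetProd {s : Finset ι} {f : ι → MvPolynomial σ R} {A : ι → ℝ≥0}
    (h : ∀ i ∈ s, CoeffNormLE (f i) (A i)) : CoeffNormLE (∏ i ∈ s, f i) (∏ i ∈ s, A i) := by
  classical
  induction s using Finset.induction_on with
  | empty => simpa using coeffNormLE_monomial_one (R := R) (σ := σ) 0
  | insert i s hi ih =>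
    rw [Finset.prod_insert hi, Finset.prod_insert hi]
    exact (h i (Finset.mem_insert_self i s)).mul (ih fun j hj => h j (Finset.mem_insert_of_mem hj))

theorem CoeffNormLE.finsuppProd_pow {f : ι → MvPolynomial σ R} {u : ι → ℕ} {c : ℝ≥0}
    (h : ∀ i, CoeffNormLE (f i) (c ^ u i)) (α : ι →₀ ℕ) :
    CoeffNormLE (α.prod fun i k => f i ^ k) (c ^ weight u α) := by
  have hpow : ∀ i, CoeffNormLE (f i ^ α i) ((c ^ u i) ^ α i) := fun i => by
    simpa using CoeffNormLE.finsetProd (s := Finset.range (α i)) fun _ _ => h i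
  simpa [Finsupp.prod, weight_apply, Finsupp.sum, Finset.prod_pow_eq_pow_sum, ← pow_mul,
    mul_comm] using
    CoeffNormLE.finsetProd (s := α.support) fun i _ => hpow i

theorem norm_tsum_coeff_finsuppProd_le {w : σ → ℕ} {u : ι → ℕ} {f : ι → MvPolynomial σ R}
    {c : ℝ≥0} {K : ℕ} (hdeg : ∀ i, (f i).weightedTotalDegree w ≤ u i * K)
    (hcoeff : ∀ i, CoeffNormLE (f i) (c ^ u i)) (a : (ι →₀ ℕ) → R) (ha : ∀ α, ‖a α‖ ≤ 1)
    (m : σ →₀ ℕ) {C : ℝ} (hC : 0 ≤ C) (hcC : ∀ n, weight w m ≤ n * K → (c : ℝ) ^ n ≤ C) :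
    ‖∑' α, a α * coeff m (α.prod fun i k => f i ^ k)‖ ≤ C := by
  refine IsUltrametricDist.norm_tsum_le_of_forall_le_of_nonneg hC fun α => ?_
  obtain hz | hnz := eq_or_ne (coeff m (α.prod fun i k => f i ^ k)) 0
  · simpa [hz] using hC
  have hm : weight w m ≤ weight u α * K := calc
    weight w m ≤ _ := le_weightedTotalDegree w (mem_support_iff.mpr hnz)
    _ ≤ weight (fun i => (f i).weightedTotalDegree w) α :=
      weightedTotalDegree_finsuppProd_pow_le w f α
    _ ≤ weight (fun i => u i * K) α := weight_le_weight hdeg α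
    _ = weight u α * K := by simp [weight_apply, Finsupp.sum, Finset.sum_mul, mul_assoc]
  calc ‖a α * coeff m (α.prod fun i k => f i ^ k)‖ ≤ ‖a α‖ * ↑(c ^ weight u α) :=
        CoeffNormLE.finsuppProd_pow hcoeff α m (a α)
    _ ≤ (c : ℝ) ^ weight u α := by simpa using mul_le_mul_of_nonneg_right (ha α) (by positivity)
    _ ≤ C := hcC _ hm

end CoeffNormLE

end MvPolynomial

theorem rpow_neg_one_div_pow_le {p : ℝ} (hp : 1 ≤ p) {e : ℝ} (he : 0 ≤ e) {n : ℕ} {D K : ℝ}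
    (hK : 0 < K) (hD : D ≤ n * K) : (p ^ (-1 / e)) ^ n ≤ p ^ (-(1 / e) * (D / K - 1)) := by
  rw [← Real.rpow_natCast, ← Real.rpow_mul (by linarith)]
  refine Real.rpow_le_rpow_of_exponent_le hp ?_
  have hDK : D / K ≤ n := (div_le_iff₀ hK).2 hD
  rw [neg_div, neg_mul, neg_mul, neg_le_neg_iff]
  exact mul_le_mul_of_nonneg_left (by linarith) (by positivity)

def deltaLevel (r d : ℕ) (v : Fin (r + 1) × Fin d) : ℕ := if (v.1 : ℕ) = 0 then 0 else 1

theorem deltaLevel_le_one {r d : ℕ} (v : Fin (r + 1) × Fin d) : deltaLevel r d v ≤ 1 := by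
  unfold deltaLevel
  split_ifs <;> simp

theorem deltaDeg_eq_weight (r d : ℕ) (mo : (Fin (r + 1) × Fin d) →₀ ℕ) :
    DeltaDeg r d mo = weight (deltaLevel r d) mo := by
  rw [DeltaDeg, weight_eq_sum]
  refine Finset.sum_congr rfl fun v _ => ?_
  unfold deltaLevel
  split_ifs <;> simp

/-- The substitution `x ↦ x`, `δ_π^i x ↦ π · G_i` for `i ≥ 1`. -/
noncomputable def deltaSubst {R : Type*} [CommSemiring R] {r d : ℕ} (π : R)
    (G : Fin (r + 1) × Fin d → MvPolynomial (Fin (r + 1) × Fin d) R) (v : Fin (r + 1) × Fin d) :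
    MvPolynomial (Fin (r + 1) × Fin d) R :=
  if (v.1 : ℕ) = 0 then X v else C π * G v

theorem weightedTotalDegree_deltaSubst_le {R : Type*} [CommSemiring R] {p r d : ℕ} (hp : 0 < p)
    (π : R) {G : Fin (r + 1) × Fin d → MvPolynomial (Fin (r + 1) × Fin d) R}
    (hGdeg : ∀ v, (G v).totalDegree ≤ p ^ ((v.1 : ℕ) - 1)) (v : Fin (r + 1) × Fin d) :
    (deltaSubst π G v).weightedTotalDegree (deltaLevel r d) ≤ deltaLevel r d v * p ^ (r - 1) := by
  by_cases hv : (v.1 : ℕ) = 0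
  · simpa [deltaSubst, deltaLevel, hv] using weightedTotalDegree_X_le (R := R) (deltaLevel r d) v
  · calc (deltaSubst π G v).weightedTotalDegree (deltaLevel r d)
        ≤ (C π * G v).totalDegree := by
          simpa [deltaSubst, hv] using weightedTotalDegree_le_totalDegree _ deltaLevel_le_one _
      _ ≤ (G v).totalDegree := by rw [C_mul']; exact totalDegree_smul_le _ _
      _ ≤ p ^ ((v.1 : ℕ) - 1) := hGdeg v
      _ ≤ p ^ (r - 1) := Nat.pow_le_pow_right hp (by omega)
      _ = deltaLevel r d v * p ^ (r - 1) := by simp [deltaLevel, hv]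

theorem coeffNormLE_deltaSubst {R : Type*} [NormedCommRing R] {r d : ℕ} (π : R)
    {G : Fin (r + 1) × Fin d → MvPolynomial (Fin (r + 1) × Fin d) R}
    (hGcoeff : ∀ v mo, ‖coeff mo (G v)‖ ≤ 1) (v : Fin (r + 1) × Fin d) :
    CoeffNormLE (deltaSubst π G v) (‖π‖₊ ^ deltaLevel r d v) := by
  by_cases hv : (v.1 : ℕ) = 0
  · simp only [deltaSubst, deltaLevel, hv, ↓reduceIte, pow_zero]
    exact coeffNormLE_monomial_one _
  · simpa [deltaSubst, deltaLevel, hv] using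
      (coeffNormLE_of_norm_coeff_le (A := 1) (by simpa using hGcoeff v)).C_mul π

theorem stmt12_general {R : Type*} [NormedCommRing R]
    (hna : ∀ a b : R, ‖a + b‖ ≤ max ‖a‖ ‖b‖)
    (p e r d : ℕ) (hp : p.Prime)
    (π : R) (hπ : ‖π‖ = (p : ℝ) ^ (-(1 : ℝ) / (e : ℝ)))
    (a : ((Fin (r + 1) × Fin d) →₀ ℕ) → R)
    (ha1 : ∀ α, ‖a α‖ ≤ 1)
    (G : Fin (r + 1) × Fin d → MvPolynomial (Fin (r + 1) × Fin d) R)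
    (hGdeg : ∀ v, (G v).totalDegree ≤ p ^ ((v.1 : ℕ) - 1))
    (hGcoeff : ∀ v mo, ‖MvPolynomial.coeff mo (G v)‖ ≤ 1) :
    ∀ mo : (Fin (r + 1) × Fin d) →₀ ℕ,
      ‖∑' α : (Fin (r + 1) × Fin d) →₀ ℕ,
          a α * MvPolynomial.coeff mo (Finsupp.prod α fun v k =>
            (if (v.1 : ℕ) = 0 then MvPolynomial.X v
              else MvPolynomial.C π * G v) ^ k)‖ ≤
        (p : ℝ) ^ (-(1 / (e : ℝ)) * ((DeltaDeg r d mo : ℝ) / (p : ℝ) ^ (r - 1) - 1)) := by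
  intro mo
  have := IsUltrametricDist.isUltrametricDist_of_forall_norm_add_le_max_norm hna
  have hp1 : (1 : ℝ) < p := by exact_mod_cast hp.one_lt
  refine norm_tsum_coeff_finsuppProd_le (f := deltaSubst π G) (c := ‖π‖₊) (K := p ^ (r - 1))
    (weightedTotalDegree_deltaSubst_le hp.pos π hGdeg) (coeffNormLE_deltaSubst π hGcoeff)
    a ha1 mo (by positivity) fun n hn => ?_
  rw [← deltaDeg_eq_weight] at hn
  rw [coe_nnnorm, hπ]
  exact rpow_neg_one_div_pow_le hp1.le (Nat.cast_nonneg e) (by positivity)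
    (by exact_mod_cast hn)

/-- Quantitative `δ_p`-overconvergence.  Let `v_p(π) = 1/e` (i.e. `‖π‖ = p^(-1/e)`),
`1 ≤ r ≤ e-1`, and let `F = Σ a_α x^(α₀) (δ_π x)^(α₁) ⋯ (δ_π^r x)^(α_r)` be a restricted
series with integral coefficients.  Substitute `δ_π^i x = π·G_i(δ_p x,…,δ_p^i x)` where
`G_i` has integral coefficients, total degree `≤ p^(i-1)` and involves only the variables
of levels `1,…,i`.  Then the coefficient of each monomial `x^α (δ_p x)^(β₁)⋯(δ_p^r x)^(β_r)`
of the substituted series (computed as a `tsum`) has `p`-adic valuation at least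
`(1/e)·(|β₁+⋯+β_r|/p^(r-1) - 1)`, i.e. norm `≤ p^(-(1/e)(|β|/p^(r-1)-1))`.
In particular `F` is overconvergent in the `δ_p`-variables with radius `≥ p^(1/(p^(r-1)e))`. -/
theorem stmt12 {R : Type*} [NormedCommRing R] [CompleteSpace R]
    (hna : ∀ a b : R, ‖a + b‖ ≤ max ‖a‖ ‖b‖)
    (p e r d : ℕ) (hp : p.Prime) (h5 : 5 ≤ p) (he : 2 ≤ e) (hr1 : 1 ≤ r) (hre : r ≤ e - 1)
    (π : R) (hπ : ‖π‖ = (p : ℝ) ^ (-(1 : ℝ) / (e : ℝ)))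
    (a : ((Fin (r + 1) × Fin d) →₀ ℕ) → R)
    (ha1 : ∀ α, ‖a α‖ ≤ 1)
    (har : Tendsto a cofinite (nhds 0))
    (G : Fin (r + 1) × Fin d → MvPolynomial (Fin (r + 1) × Fin d) R)
    (hGdeg : ∀ v, (G v).totalDegree ≤ p ^ ((v.1 : ℕ) - 1))
    (hGcoeff : ∀ v mo, ‖MvPolynomial.coeff mo (G v)‖ ≤ 1)
    (hGvars : ∀ v, ∀ w ∈ (G v).vars, 1 ≤ (w.1 : ℕ) ∧ (w.1 : ℕ) ≤ (v.1 : ℕ)) :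
    ∀ mo : (Fin (r + 1) × Fin d) →₀ ℕ,
      ‖∑' α : (Fin (r + 1) × Fin d) →₀ ℕ,
          a α * MvPolynomial.coeff mo (Finsupp.prod α fun v k =>
            (if (v.1 : ℕ) = 0 then MvPolynomial.X v
              else MvPolynomial.C π * G v) ^ k)‖ ≤
        (p : ℝ) ^ (-(1 / (e : ℝ)) * ((DeltaDeg r d mo : ℝ) / (p : ℝ) ^ (r - 1) - 1)) :=
  stmt12_general hna p e r d hp π hπ a ha1 G hGdeg hGcoeff
end

section
/- Let f = Σ_{n≥1} p^n y_1^n ∈ R_p[y_1, y_2]^ (p-adic completion). Then: (1) f is overconvergent in the variables (y_1,y_2) with radius ≥ p; (2) for every ρ > 1 there exists an R_p-algebra automorphism σ of R_p[y_1,y_2] such that the induced automorphism σ̂ of R_p[y_1,y_2]^ sends f to a series that is not overconvergent in (y_1,y_2) with radius ≥ ρ. Specifically, for m with ρ^m > p, the automorphism σ(y_1) = y_1 + y_2^m, σ(y_2) = y_2 works. -/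
/-! The coefficients of `f` are `p^n` in front of `y₁^n`, so for the norm `|p| = p⁻¹` they
exactly balance the weight `p^n`. After the substitution `y₁ ↦ y₁ + y₂^m` the monomial `y₂^(mn)`
acquires the coefficient `p^n`, and its weighted size `p^(-n) ρ^(mn) = (ρ^m / p)^n` is unbounded
as soon as `ρ^m > p`. -/

lemma norm_natCast_pow_mul_pow {R : Type*} [NormedField R] {p : ℕ}
    (hnp : ‖(p : R)‖ = (p : ℝ)⁻¹) (r : ℝ) (n : ℕ) :
    ‖(p : R) ^ n‖ * r ^ n = (r / p) ^ n := by
  rw [norm_pow, hnp, inv_pow, div_pow, inv_mul_eq_div]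

/-- Let `f = Σ_{n≥1} p^n y₁^n`, viewed by its coefficient family on monomials
`y₁^(β 0)·y₂^(β 1)`.  Then (1) `f` is overconvergent in `(y₁,y₂)` with radius `≥ p`;
(2) for every `ρ > 1` and every `m` with `ρ^m > p`, the automorphism
`σ(y₁) = y₁ + y₂^m`, `σ(y₂) = y₂` sends `f` to `σ̂f = Σ_{n≥1} p^n (y₁+y₂^m)^n`, whose
coefficient family (computed by the binomial theorem) is not overconvergent in
`(y₁,y₂)` with radius `≥ ρ`. -/
theorem stmt14 {R : Type*} [NormedField R] (p : ℕ) (hp : p.Prime)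
    (hnp : ‖((p : R))‖ = (p : ℝ)⁻¹) :
    (∃ M : ℝ, ∀ β : Fin 2 →₀ ℕ,
      ‖(if β 1 = 0 ∧ 1 ≤ β 0 then ((p : R) ^ (β 0)) else 0)‖ * (p : ℝ) ^ (β 0 + β 1) ≤ M) ∧
    (∀ ρ : ℝ, 1 < ρ → ∀ m : ℕ, (p : ℝ) < ρ ^ m →
      ¬ ∃ M : ℝ, ∀ β : Fin 2 →₀ ℕ,
        ‖(if m ∣ β 1 ∧ 1 ≤ β 0 + β 1 / m
            then ((p : R) ^ (β 0 + β 1 / m)) * ((Nat.choose (β 0 + β 1 / m) (β 1 / m) : R))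
            else 0)‖ * ρ ^ (β 0 + β 1) ≤ M) := by
  have hp1 : (1 : ℝ) < p := by exact_mod_cast hp.one_lt
  refine ⟨⟨1, fun β => ?_⟩, fun ρ hρ m hm ⟨M, hM⟩ => ?_⟩
  · split_ifs with h
    · rw [h.1, add_zero, norm_natCast_pow_mul_pow hnp, div_self (by positivity), one_pow]
    · simp
  · have hm0 : 0 < m := Nat.pos_of_ne_zero <| by rintro rfl; rw [pow_zero] at hm; linarith
    have hq : 1 < ρ ^ m / p := (one_lt_div (by positivity)).2 hm
    obtain ⟨n, hMn, hn⟩ := ((tendsto_pow_atTop_atTop_of_one_lt hq).eventually_gt_atTop M).and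
      (Filter.eventually_ge_atTop 1) |>.exists
    have hcoeff := hM (Finsupp.single 1 (n * m))
    simp only [Finsupp.single_eq_same, Finsupp.single_eq_of_ne (show (0 : Fin 2) ≠ 1 by decide),
      Nat.mul_div_cancel _ hm0, zero_add, dvd_mul_left, true_and, if_pos hn, Nat.choose_self,
      Nat.cast_one, mul_one, pow_mul', norm_natCast_pow_mul_pow hnp] at hcoeff
    linarith
end
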